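/- Assume 2 ≤ m ≤ N−2. Then for all collections e and e′ of finite norm, ‖F(e) − F(e′)‖ ≤ (4|ε| + max{‖e‖, ‖e′‖}) · ‖e − e′‖. Consequently, for δ > 0 and ε with 4|ε| + δ < 1, F is a contraction on the closed ball of radius δ about the origin. -/

import Mathlib

open Finset
open scoped symmDiff

/-- `M = {1,…,m}` viewed inside `ℤ/Nℤ`. -/
def Mset (N m : ℕ) : Finset (ZMod N) := (Finset.Icc 1 m).image (fun i : ℕ => (i : ZMod N))

/-- `∂Y`: the set of `j ∈ ℤ/Nℤ` such that exactly one of `j`, `j+1` lies in `Y`. -/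
def pbdry (N : ℕ) [NeZero N] (Y : Finset (ZMod N)) : Finset (ZMod N) :=
  Finset.univ.filter fun j => (j ∈ Y ∧ j + 1 ∉ Y) ∨ (j ∉ Y ∧ j + 1 ∈ Y)

/-- `n(X) = |∂(X Δ M)|`. -/
def nX (N m : ℕ) [NeZero N] (X : Finset (ZMod N)) : ℕ := (pbdry N (X ∆ Mset N m)).card

/-- The translate `Y + s = {i + s : i ∈ Y}`. -/
def tr (N : ℕ) (Y : Finset (ZMod N)) (s : ZMod N) : Finset (ZMod N) := Y.image (· + s)

/-- Extend a family of coefficients by setting `e(∅) := 1` and `e(M Δ (M+s)) := 0`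
for `s ≠ 0`. -/
def pext (N m : ℕ) [NeZero N] (e : Finset (ZMod N) → ℝ) : Finset (ZMod N) → ℝ :=
  fun X =>
    if X = ∅ then 1
    else if ∃ s : ZMod N, X = Mset N m ∆ tr N (Mset N m) s then 0
    else e X

/-- The sets `X` with `X:m` (i.e. `|X Δ M| = m`) and `n(X) > 2`. -/
def psector (N m : ℕ) [NeZero N] : Finset (Finset (ZMod N)) :=
  Finset.univ.filter fun X => (X ∆ Mset N m).card = m ∧ 2 < nX N m X

/-- The droplet fixed-point map `F(e_s, e(X)) = (e′_s, e′(X))`, where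
`e′_s = 2ε·Σ_{j ∈ ∂(M−s)} e(M Δ (M−s) Δ {j,j+1})` and, for `X` with `X:m` and `n(X) > 2`,
`e′(X) = −(ε/(n(X)−2))·Σ_{j ∈ ∂(X Δ M)} e(X Δ {j,j+1})
  + (1/(2(n(X)−2)))·Σ_{s} e_s·e((X+s) Δ (M+s) Δ M)`
(with the conventions `e(∅) = 1`, `e(M Δ (M+s)) = 0` for `s ≠ 0`);
all other components are set to `0`. -/
noncomputable def dropF (N m : ℕ) [NeZero N] (ε : ℝ)
    (p : (ZMod N → ℝ) × (Finset (ZMod N) → ℝ)) :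
    (ZMod N → ℝ) × (Finset (ZMod N) → ℝ) :=
  (fun s => 2 * ε * ∑ j ∈ pbdry N (tr N (Mset N m) (-s)),
      pext N m p.2 (Mset N m ∆ tr N (Mset N m) (-s) ∆ {j, j + 1}),
    fun X =>
      if (X ∆ Mset N m).card = m ∧ 2 < nX N m X then
        -(ε / ((nX N m X : ℝ) - 2)) *
            ∑ j ∈ pbdry N (X ∆ Mset N m), pext N m p.2 (X ∆ {j, j + 1})
          + (1 / (2 * ((nX N m X : ℝ) - 2))) *
              ∑ s : ZMod N, p.1 s * pext N m p.2 (tr N X s ∆ tr N (Mset N m) s ∆ Mset N m)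
      else 0)

/-- The norm `‖e‖ = Σ_s |e_s| + 2·Σ_{X:m, n(X)>2} (n(X)−2)·|e(X)|`. -/
def pnorm (N m : ℕ) [NeZero N] (p : (ZMod N → ℝ) × (Finset (ZMod N) → ℝ)) : ℝ :=
  ∑ s : ZMod N, |p.1 s|
    + 2 * ∑ X ∈ psector N m, ((nX N m X : ℝ) - 2) * |p.2 X|

/-!
Write `d = e − e′`. Apart from the bilinear collision term `Σ_s e_s·e(…)`, both components of
`F(e) − F(e′)` are sums of hopping terms `d(Y Δ {j,j+1})`. These are controlled by double counting:
a set `Y` of the sector is reached from at most `n(Y)` sources, and `n(Y) ≤ 2(n(Y) − 2)` because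
`|∂Y|` is always even, so `n(Y) > 2` forces `n(Y) ≥ 4`; this gives the factor `4|ε|`. The map
`X ↦ (X+s) Δ (M+s) Δ M` sends the sector injectively into itself, so the collision term is
bounded by the product of the norms. The pinned values `e(∅) = 1`, `e(M Δ (M+s)) = 0` drop out of
differences because a set of size `m` with at most two boundary points is a translate of `M`.
-/

section Counting
variable {ι κ M : Type*} [AddCommMonoid M] [PartialOrder M] [IsOrderedAddMonoid M]

lemma Finset.sum_le_sum_of_injOn {s : Finset ι} {t : Finset κ} {f : ι → M} {g : κ → M}
    (e : ι → κ) (he : Set.InjOn e s) (hest : ∀ i ∈ s, f i ≠ 0 → e i ∈ t)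
    (hg : ∀ j ∈ t, 0 ≤ g j) (h : ∀ i ∈ s, f i = g (e i)) :
    ∑ i ∈ s, f i ≤ ∑ j ∈ t, g j := by
  classical
  calc ∑ i ∈ s, f i = ∑ i ∈ s with f i ≠ 0, g (e i) := by
        rw [← sum_filter_ne_zero]
        exact sum_congr rfl fun i hi => h i (mem_filter.mp hi).1
    _ = ∑ j ∈ (s.filter (f · ≠ 0)).image e, g j :=
        (sum_image fun i hi j hj => he (mem_filter.mp hi).1 (mem_filter.mp hj).1).symm
    _ ≤ ∑ j ∈ t, g j := by
        refine sum_le_sum_of_subset_of_nonneg ?_ fun j hj _ => hg j hj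
        intro j hj
        obtain ⟨i, hi, rfl⟩ := mem_image.mp hj
        exact hest i (mem_filter.mp hi).1 (mem_filter.mp hi).2

lemma Finset.sum_sum_le_sum_card_smul {α β γ : Type*} (A : Finset α) (B : α → Finset β)
    (K : γ → Finset β) {Y : Finset γ} {f : γ → M} (g : α → β → γ) (hf : ∀ y ∈ Y, 0 ≤ f y)
    (hY : ∀ a ∈ A, ∀ b ∈ B a, f (g a b) ≠ 0 → g a b ∈ Y) (hK : ∀ a ∈ A, ∀ b ∈ B a, b ∈ K (g a b))
    (hinj : ∀ a ∈ A, ∀ a' ∈ A, ∀ b ∈ B a, g a b = g a' b → a = a') :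
    ∑ a ∈ A, ∑ b ∈ B a, f (g a b) ≤ ∑ y ∈ Y, (K y).card • f y := by
  simp only [← sum_const]
  rw [sum_sigma' A B, sum_sigma' Y K]
  refine sum_le_sum_of_injOn (fun x => ⟨g x.1 x.2, x.2⟩) ?_ ?_ ?_ fun _ _ => rfl
  · rintro ⟨a, b⟩ hab ⟨a', b'⟩ hab' h
    simp only [Sigma.mk.injEq, heq_eq_eq] at h
    obtain ⟨h, rfl⟩ := h
    rw [mem_coe, mem_sigma] at hab hab'
    rw [hinj a hab.1 a' hab'.1 b hab.2 h]
  · rintro ⟨a, b⟩ hab hne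
    rw [mem_sigma] at hab ⊢
    exact ⟨hY a hab.1 b hab.2 hne, hK a hab.1 b hab.2⟩
  · rintro ⟨y, b⟩ hyb
    exact hf y (mem_sigma.mp hyb).1

end Counting

section ZModVal
variable {N : ℕ} [NeZero N]

lemma ZMod.natCast_eq_iff_eq_val {k : ℕ} (hk : k < N) {x : ZMod N} :
    (k : ZMod N) = x ↔ k = x.val :=
  ⟨fun h => h ▸ (ZMod.val_cast_of_lt hk).symm, fun h => h ▸ ZMod.natCast_zmod_val x⟩

lemma ZMod.val_add_one_eq_ite (x : ZMod N) :
    (x + 1).val = if x.val + 1 = N then 0 else x.val + 1 := by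
  have hx : x + 1 = ((x.val + 1 : ℕ) : ZMod N) := by
    rw [Nat.cast_succ, ZMod.natCast_zmod_val]
  have := x.val_lt
  split_ifs with h
  · rw [hx, h, ZMod.natCast_self, ZMod.val_zero]
  · rw [hx, ZMod.val_cast_of_lt (by omega)]

end ZModVal

section Translation
variable {N : ℕ}

lemma mem_tr {Y : Finset (ZMod N)} {s x : ZMod N} : x ∈ tr N Y s ↔ x - s ∈ Y := by
  simp [tr, sub_eq_add_neg]

lemma card_tr (Y : Finset (ZMod N)) (s : ZMod N) : (tr N Y s).card = Y.card :=
  card_image_of_injective _ (add_left_injective s)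

lemma tr_injective (s : ZMod N) : Function.Injective fun Y => tr N Y s :=
  image_injective (add_left_injective s)

lemma tr_symmDiff (A B : Finset (ZMod N)) (s : ZMod N) :
    tr N (A ∆ B) s = tr N A s ∆ tr N B s :=
  image_symmDiff A B (add_left_injective s)

end Translation

section Boundary
variable {N : ℕ} [NeZero N]

lemma mem_pbdry {Y : Finset (ZMod N)} {j : ZMod N} :
    j ∈ pbdry N Y ↔ (j ∈ Y ∧ j + 1 ∉ Y) ∨ (j ∉ Y ∧ j + 1 ∈ Y) := by
  simp [pbdry]

lemma card_pbdry_tr (Y : Finset (ZMod N)) (s : ZMod N) :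
    (pbdry N (tr N Y s)).card = (pbdry N Y).card := by
  have : pbdry N (tr N Y s) = tr N (pbdry N Y) s := by
    ext j
    simp [mem_pbdry, mem_tr, sub_add_eq_add_sub]
  rw [this, card_tr]

lemma mem_pbdry_symmDiff_pair {Z : Finset (ZMod N)} {j : ZMod N} :
    j ∈ pbdry N (Z ∆ {j, j + 1}) ↔ j ∈ pbdry N Z := by
  simp only [mem_pbdry, mem_symmDiff, mem_insert, mem_singleton]
  tauto

lemma card_symmDiff_pair_of_mem_pbdry {Z : Finset (ZMod N)} {j : ZMod N}
    (hj : j ∈ pbdry N Z) : (Z ∆ {j, j + 1}).card = Z.card := by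
  rcases mem_pbdry.1 hj with ⟨hj, hj1⟩ | ⟨hj, hj1⟩
  · have : Z ∆ {j, j + 1} = insert (j + 1) (Z.erase j) := by
      ext x
      simp only [mem_symmDiff, mem_insert, mem_singleton, mem_erase]
      grind
    rw [this, card_insert_of_notMem (by simp [hj1]), card_erase_add_one hj]
  · have : Z ∆ {j, j + 1} = insert j (Z.erase (j + 1)) := by
      ext x
      simp only [mem_symmDiff, mem_insert, mem_singleton, mem_erase]
      grind
    rw [this, card_insert_of_notMem (by simp [hj]), card_erase_add_one hj1]

/-- Mod 2, `|∂Y| = Σ_j (1_Y(j) + 1_Y(j+1)) = 2 |Y|`. -/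
lemma even_card_pbdry (Y : Finset (ZMod N)) : Even (pbdry N Y).card := by
  rw [← ZMod.natCast_eq_zero_iff_even]
  let χ : ZMod N → ZMod 2 := fun j => if j ∈ Y then 1 else 0
  have hχ : ∀ j, (if j ∈ pbdry N Y then (1 : ZMod 2) else 0) = χ j + χ (j + 1) := by
    intro j
    simp only [χ, mem_pbdry]
    split_ifs <;> simp_all [show (1 + 1 : ZMod 2) = 0 from rfl]
  calc ((pbdry N Y).card : ZMod 2) = ∑ j, if j ∈ pbdry N Y then (1 : ZMod 2) else 0 := by
        simp
    _ = ∑ j, χ j + ∑ j, χ j := by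
        rw [sum_congr rfl fun j _ => hχ j, sum_add_distrib,
          ← Equiv.sum_comp (Equiv.addRight (1 : ZMod N)) χ]
        rfl
    _ = 0 := CharTwo.add_self_eq_zero _

lemma exists_notMem_add_one_mem {Z : Finset (ZMod N)} {x y : ZMod N} (hx : x ∈ Z)
    (hy : y ∉ Z) : ∃ b, b ∉ Z ∧ b + 1 ∈ Z := by
  by_contra! h
  have key : ∀ k : ℕ, y + k ∉ Z := by
    intro k
    induction k with
    | zero => simpa using hy
    | succ k ih => simpa [add_assoc] using h _ ih
  exact key (x - y).val (by simpa using hx)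

end Boundary

section Interval
variable {N m : ℕ}

lemma mem_Mset_iff [NeZero N] (hmN : m < N) {x : ZMod N} :
    x ∈ Mset N m ↔ 1 ≤ x.val ∧ x.val ≤ m := by
  constructor
  · rintro hx
    obtain ⟨i, hi, rfl⟩ := mem_image.mp hx
    rw [mem_Icc] at hi
    rwa [ZMod.val_cast_of_lt (by omega)]
  · intro hx
    exact mem_image.mpr ⟨x.val, mem_Icc.mpr hx, ZMod.natCast_zmod_val x⟩

lemma one_mem_Mset (hm : 0 < m) : (1 : ZMod N) ∈ Mset N m :=
  mem_image.mpr ⟨1, mem_Icc.mpr ⟨le_rfl, hm⟩, Nat.cast_one⟩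

lemma card_Mset (hmN : m < N) : (Mset N m).card = m := by
  rw [Mset, card_image_of_injOn, Nat.card_Icc, Nat.add_sub_cancel]
  intro x hx y hy hxy
  simp only [coe_Icc, Set.mem_Icc] at hx hy
  simpa [ZMod.val_cast_of_lt (show x < N by omega), ZMod.val_cast_of_lt (show y < N by omega)]
    using congrArg ZMod.val hxy

variable [NeZero N]

lemma pbdry_Mset_subset (hmN : m < N) : pbdry N (Mset N m) ⊆ {0, (m : ZMod N)} := by
  intro j hj
  have hmv : (m : ZMod N).val = m := ZMod.val_cast_of_lt hmN
  have := j.val_lt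
  rw [mem_pbdry, mem_Mset_iff hmN, mem_Mset_iff hmN, ZMod.val_add_one_eq_ite] at hj
  rw [mem_insert, mem_singleton, ← ZMod.val_eq_zero, ← (ZMod.val_injective N).eq_iff, hmv]
  split_ifs at hj <;> omega

lemma eq_zero_of_notMem_Mset_of_add_one_mem (hmN : m < N) {j : ZMod N} (hj : j ∉ Mset N m)
    (hj1 : j + 1 ∈ Mset N m) : j = 0 := by
  have := j.val_lt
  rw [mem_Mset_iff hmN] at hj hj1
  rw [ZMod.val_add_one_eq_ite] at hj1
  rw [← ZMod.val_eq_zero]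
  split_ifs at hj1 <;> omega

lemma tr_Mset_injective (hm : 0 < m) (hmN : m < N) : Function.Injective (tr N (Mset N m)) := by
  intro s t hst
  have h0 : t ∉ tr N (Mset N m) s := by
    simp [hst, mem_tr, mem_Mset_iff hmN]
  have h1 : t + 1 ∈ tr N (Mset N m) s := by
    simpa [hst, mem_tr] using one_mem_Mset (N := N) hm
  rw [mem_tr] at h0 h1
  exact (sub_eq_zero.mp
    (eq_zero_of_notMem_Mset_of_add_one_mem hmN h0 (by rwa [sub_add_eq_add_sub]))).symm

lemma eq_tr_Mset_of_pbdry_eq_pair {Z : Finset (ZMod N)} {b c : ZMod N} (hb : b ∉ Z)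
    (hb1 : b + 1 ∈ Z) (hbc : c ≠ b) (hZ : pbdry N Z = {b, c}) :
    Z = tr N (Mset N (c - b).val) b := by
  set L := (c - b).val with hL
  have hL0 : L ≠ 0 := by rwa [hL, Ne, ZMod.val_eq_zero, sub_eq_zero]
  have key : ∀ k < N, b + k ∈ Z ↔ 1 ≤ k ∧ k ≤ L := by
    intro k
    induction k with
    | zero => simpa using fun _ => hb
    | succ k ih =>
      intro hk
      have ih := ih (by omega)
      rw [Nat.cast_succ, ← add_assoc]
      by_cases hk0 : k = 0
      · subst hk0
        simpa [hb1] using Nat.one_le_iff_ne_zero.mpr hL0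
      by_cases hkL : k = L
      · have hc : b + k = c := by
          rw [← eq_sub_iff_add_eq', ZMod.natCast_eq_iff_eq_val (by omega), hkL]
        have hcZ : c ∈ Z := hc ▸ ih.mpr ⟨by omega, hkL.le⟩
        have hcb : c ∈ pbdry N Z := by simp [hZ]
        rw [hc]
        simpa [hcZ, hkL] using (mem_pbdry.mp hcb)
      · have hb' : b + k ≠ b := by
          rwa [Ne, add_eq_left, ZMod.natCast_eq_iff_eq_val (by omega), ZMod.val_zero]
        have hc' : b + k ≠ c := by
          rw [Ne, ← eq_sub_iff_add_eq', ZMod.natCast_eq_iff_eq_val (by omega)]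
          exact hkL
        have hnot : b + k ∉ pbdry N Z := by simp [hZ, hb', hc']
        rw [mem_pbdry] at hnot
        have : b + k ∈ Z ↔ b + k + 1 ∈ Z := by tauto
        rw [← this, ih]
        omega
  ext x
  rw [mem_tr, mem_Mset_iff (ZMod.val_lt _), ← key _ (x - b).val_lt, ZMod.natCast_zmod_val,
    add_sub_cancel]

lemma exists_eq_tr_Mset_of_card_pbdry_le_two (hm : 0 < m) (hmN : m < N) {Z : Finset (ZMod N)}
    (hZ : Z.card = m) (hZb : (pbdry N Z).card ≤ 2) : ∃ t, Z = tr N (Mset N m) t := by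
  obtain ⟨x, hx⟩ := card_pos.mp (hZ ▸ hm)
  obtain ⟨y, hy⟩ : ∃ y, y ∉ Z := by
    by_contra! h
    rw [eq_univ_of_forall h, card_univ, ZMod.card] at hZ
    omega
  obtain ⟨b, hb, hb1⟩ := exists_notMem_add_one_mem hx hy
  have hbZ : b ∈ pbdry N Z := mem_pbdry.mpr (Or.inr ⟨hb, hb1⟩)
  have hcard : ((pbdry N Z).erase b).card = 1 := by
    obtain ⟨r, hr⟩ := even_card_pbdry (N := N) Z
    have := card_pos.mpr ⟨b, hbZ⟩
    rw [card_erase_of_mem hbZ]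
    omega
  obtain ⟨c, hc⟩ := card_eq_one.mp hcard
  have hcb : c ≠ b := (mem_erase.mp (hc ▸ mem_singleton_self c)).1
  have hZ' := eq_tr_Mset_of_pbdry_eq_pair hb hb1 hcb (by rw [← insert_erase hbZ, hc])
  have hL : (c - b).val = m := by rw [← hZ, hZ', card_tr, card_Mset (ZMod.val_lt _)]
  exact ⟨b, hL ▸ hZ'⟩

end Interval

section Sector
variable {N m : ℕ} [NeZero N]

lemma four_le_nX {X : Finset (ZMod N)} (hX : X ∈ psector N m) : 4 ≤ nX N m X := by
  have h := (mem_filter.mp hX).2.2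
  obtain ⟨r, hr⟩ := even_card_pbdry (X ∆ Mset N m)
  rw [nX] at h ⊢
  omega

lemma nX_symmDiff_tr_Mset_le_two (hmN : m < N) (s : ZMod N) :
    nX N m (Mset N m ∆ tr N (Mset N m) s) ≤ 2 := by
  rw [nX, symmDiff_comm, symmDiff_symmDiff_cancel_left, card_pbdry_tr]
  exact (card_le_card (pbdry_Mset_subset hmN)).trans card_le_two

lemma pext_of_mem_psector (hmN : m < N) (e : Finset (ZMod N) → ℝ) {X : Finset (ZMod N)}
    (hX : X ∈ psector N m) : pext N m e X = e X := by
  have hns : ¬ ∃ s, X = Mset N m ∆ tr N (Mset N m) s := by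
    rintro ⟨s, rfl⟩
    have := (mem_filter.mp hX).2.2
    have := nX_symmDiff_tr_Mset_le_two hmN s
    omega
  have hne : X ≠ ∅ := by
    rintro rfl
    exact hns ⟨0, by simp [tr]⟩
  rw [pext, if_neg hne, if_neg hns]

/-- Off the sector, the only sets with `X:m` are `M Δ (M+s)`, where `pext` is pinned. -/
lemma pext_eq_pext_of_notMem_psector (hm : 0 < m) (hmN : m < N) (e e' : Finset (ZMod N) → ℝ)
    {X : Finset (ZMod N)} (hX : (X ∆ Mset N m).card = m) (hX' : X ∉ psector N m) :
    pext N m e X = pext N m e' X := by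
  have hn : nX N m X ≤ 2 := by
    by_contra h
    exact hX' (mem_filter.mpr ⟨mem_univ _, hX, by omega⟩)
  obtain ⟨t, ht⟩ := exists_eq_tr_Mset_of_card_pbdry_le_two hm hmN hX hn
  have hXt : ∃ s, X = Mset N m ∆ tr N (Mset N m) s :=
    ⟨t, by rw [← ht, symmDiff_comm X, symmDiff_symmDiff_cancel_left]⟩
  simp only [pext, if_pos hXt]

end Sector

def sectorNorm (N m : ℕ) [NeZero N] (e : Finset (ZMod N) → ℝ) : ℝ :=
  ∑ X ∈ psector N m, ((nX N m X : ℝ) - 2) * |e X|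

section Norm
variable {N m : ℕ} [NeZero N]

lemma pnorm_eq (p : (ZMod N → ℝ) × (Finset (ZMod N) → ℝ)) :
    pnorm N m p = ∑ s, |p.1 s| + 2 * sectorNorm N m p.2 := rfl

lemma two_le_nX_sub_two {X : Finset (ZMod N)} (hX : X ∈ psector N m) :
    (2 : ℝ) ≤ (nX N m X : ℝ) - 2 := by
  have : (4 : ℝ) ≤ nX N m X := by exact_mod_cast four_le_nX hX
  linarith

lemma two_mul_sum_abs_le_sectorNorm (e : Finset (ZMod N) → ℝ) :
    2 * ∑ X ∈ psector N m, |e X| ≤ sectorNorm N m e := by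
  rw [sectorNorm, mul_sum]
  exact sum_le_sum fun X hX => mul_le_mul_of_nonneg_right (two_le_nX_sub_two hX) (abs_nonneg _)

lemma sectorNorm_nonneg (e : Finset (ZMod N) → ℝ) : 0 ≤ sectorNorm N m e :=
  sum_nonneg fun X hX => mul_nonneg (by linarith [two_le_nX_sub_two hX]) (abs_nonneg _)

lemma sum_abs_fst_le_pnorm (p : (ZMod N → ℝ) × (Finset (ZMod N) → ℝ)) :
    ∑ s, |p.1 s| ≤ pnorm N m p := by
  rw [pnorm_eq]
  linarith [sectorNorm_nonneg (N := N) (m := m) p.2]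

lemma two_mul_sectorNorm_le_pnorm (p : (ZMod N → ℝ) × (Finset (ZMod N) → ℝ)) :
    2 * sectorNorm N m p.2 ≤ pnorm N m p := by
  rw [pnorm_eq]
  linarith [sum_nonneg fun s (_ : s ∈ univ) => abs_nonneg (p.1 s)]

lemma pnorm_nonneg (p : (ZMod N → ℝ) × (Finset (ZMod N) → ℝ)) : 0 ≤ pnorm N m p :=
  (mul_nonneg zero_le_two (sectorNorm_nonneg p.2)).trans (two_mul_sectorNorm_le_pnorm p)

/-- Each `Y` is reached by at most `n(Y) ≤ 2(n(Y)−2)` of the moves `Z ↦ Z Δ {j,j+1}` counted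
here, because `j ∈ ∂(Y Δ M)` determines the move. -/
lemma sum_sum_abs_pext_sub_le (hm : 0 < m) (hmN : m < N) {α : Type*} (A : Finset α)
    (B : α → Finset (ZMod N)) (g : α → ZMod N → Finset (ZMod N)) (e e' : Finset (ZMod N) → ℝ)
    (hg : ∀ a ∈ A, ∀ j ∈ B a, (g a j ∆ Mset N m).card = m ∧ j ∈ pbdry N (g a j ∆ Mset N m))
    (hinj : ∀ a ∈ A, ∀ a' ∈ A, ∀ j ∈ B a, g a j = g a' j → a = a') :
    ∑ a ∈ A, ∑ j ∈ B a, |pext N m e (g a j) - pext N m e' (g a j)| ≤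
      2 * sectorNorm N m (e - e') := by
  calc ∑ a ∈ A, ∑ j ∈ B a, |pext N m e (g a j) - pext N m e' (g a j)|
      ≤ ∑ X ∈ psector N m, (pbdry N (X ∆ Mset N m)).card • |pext N m e X - pext N m e' X| := by
        refine sum_sum_le_sum_card_smul (f := fun X => |pext N m e X - pext N m e' X|) A B
          (fun X => pbdry N (X ∆ Mset N m)) g (fun _ _ => abs_nonneg _) ?_
          (fun a ha j hj => (hg a ha j hj).2) hinj
        intro a ha j hj hne
        by_contra hX
        exact hne (by rw [pext_eq_pext_of_notMem_psector hm hmN e e' (hg a ha j hj).1 hX,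
          sub_self, abs_zero])
    _ ≤ 2 * sectorNorm N m (e - e') := by
        rw [sectorNorm, mul_sum]
        refine sum_le_sum fun X hX => ?_
        rw [nsmul_eq_mul, pext_of_mem_psector hmN e hX, pext_of_mem_psector hmN e' hX, ← mul_assoc]
        have hn : ((pbdry N (X ∆ Mset N m)).card : ℝ) ≤ 2 * ((nX N m X : ℝ) - 2) := by
          rw [← nX]
          linarith [two_le_nX_sub_two hX]
        exact mul_le_mul_of_nonneg_right hn (abs_nonneg _)

end Norm

def relTr (N m : ℕ) (X : Finset (ZMod N)) (s : ZMod N) : Finset (ZMod N) :=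
  tr N X s ∆ tr N (Mset N m) s ∆ Mset N m

section RelTr
variable {N m : ℕ}

lemma relTr_symmDiff_Mset (X : Finset (ZMod N)) (s : ZMod N) :
    relTr N m X s ∆ Mset N m = tr N (X ∆ Mset N m) s := by
  rw [relTr, symmDiff_symmDiff_cancel_right, tr_symmDiff]

lemma relTr_injective (s : ZMod N) : Function.Injective fun X => relTr N m X s := by
  intro X Y h
  have := congrArg (· ∆ Mset N m) h
  simp only [relTr_symmDiff_Mset] at this
  exact symmDiff_left_injective _ (tr_injective s this)

variable [NeZero N]

lemma relTr_mem_psector {X : Finset (ZMod N)} (hX : X ∈ psector N m) (s : ZMod N) :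
    relTr N m X s ∈ psector N m := by
  obtain ⟨-, hcard, hn⟩ := mem_filter.mp hX
  refine mem_filter.mpr ⟨mem_univ _, ?_, ?_⟩
  · rwa [relTr_symmDiff_Mset, card_tr]
  · rwa [nX, relTr_symmDiff_Mset, card_pbdry_tr]

lemma sum_psector_relTr_le (s : ZMod N) {f : Finset (ZMod N) → ℝ}
    (hf : ∀ W ∈ psector N m, 0 ≤ f W) :
    ∑ X ∈ psector N m, f (relTr N m X s) ≤ ∑ W ∈ psector N m, f W :=
  sum_le_sum_of_injOn _ (relTr_injective s).injOn (fun _ hX _ => relTr_mem_psector hX s) hf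
    fun _ _ => rfl

end RelTr

section Estimates
variable {N m : ℕ} [NeZero N] (ε : ℝ) (p q : (ZMod N → ℝ) × (Finset (ZMod N) → ℝ))

lemma dropF_sub_fst (s : ZMod N) :
    (dropF N m ε p - dropF N m ε q).1 s = 2 * ε * ∑ j ∈ pbdry N (tr N (Mset N m) (-s)),
      (pext N m p.2 (Mset N m ∆ tr N (Mset N m) (-s) ∆ {j, j + 1})
        - pext N m q.2 (Mset N m ∆ tr N (Mset N m) (-s) ∆ {j, j + 1})) := by
  simp only [dropF, Prod.fst_sub, Pi.sub_apply, mul_sub, sum_sub_distrib]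

lemma dropF_sub_snd {X : Finset (ZMod N)} (hX : X ∈ psector N m) :
    (dropF N m ε p - dropF N m ε q).2 X =
      -(ε / ((nX N m X : ℝ) - 2)) * ∑ j ∈ pbdry N (X ∆ Mset N m),
          (pext N m p.2 (X ∆ {j, j + 1}) - pext N m q.2 (X ∆ {j, j + 1}))
        + (1 / (2 * ((nX N m X : ℝ) - 2))) * ∑ s,
          (p.1 s * pext N m p.2 (relTr N m X s) - q.1 s * pext N m q.2 (relTr N m X s)) := by
  simp only [dropF, Prod.snd_sub, Pi.sub_apply, if_pos (mem_filter.mp hX).2, relTr]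
  rw [sum_sub_distrib, sum_sub_distrib]
  ring

lemma sum_abs_dropF_sub_fst_le (hm : 0 < m) (hmN : m < N) :
    ∑ s, |(dropF N m ε p - dropF N m ε q).1 s| ≤ 4 * |ε| * sectorNorm N m (p - q).2 := by
  have hhop := sum_sum_abs_pext_sub_le hm hmN univ (fun s => pbdry N (tr N (Mset N m) (-s)))
    (fun s j => Mset N m ∆ tr N (Mset N m) (-s) ∆ {j, j + 1}) p.2 q.2 ?_ ?_
  · calc ∑ s, |(dropF N m ε p - dropF N m ε q).1 s|
        ≤ ∑ s, 2 * |ε| * ∑ j ∈ pbdry N (tr N (Mset N m) (-s)),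
            |pext N m p.2 (Mset N m ∆ tr N (Mset N m) (-s) ∆ {j, j + 1})
              - pext N m q.2 (Mset N m ∆ tr N (Mset N m) (-s) ∆ {j, j + 1})| := by
          refine sum_le_sum fun s _ => ?_
          rw [dropF_sub_fst, abs_mul, abs_mul, abs_two]
          exact mul_le_mul_of_nonneg_left (abs_sum_le_sum_abs _ _) (by positivity)
      _ ≤ 2 * |ε| * (2 * sectorNorm N m (p.2 - q.2)) := by
          rw [← mul_sum]
          exact mul_le_mul_of_nonneg_left hhop (by positivity)
      _ = 4 * |ε| * sectorNorm N m (p - q).2 := by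
          rw [Prod.snd_sub]
          ring
  · intro s _ j hj
    have hset : Mset N m ∆ tr N (Mset N m) (-s) ∆ {j, j + 1} ∆ Mset N m
        = tr N (Mset N m) (-s) ∆ {j, j + 1} := by
      rw [symmDiff_right_comm, symmDiff_symmDiff_self']
    rw [hset, card_symmDiff_pair_of_mem_pbdry hj, card_tr, card_Mset hmN,
      mem_pbdry_symmDiff_pair]
    exact ⟨rfl, hj⟩
  · intro s _ s' _ j _ h
    rw [symmDiff_left_inj, symmDiff_right_inj] at h
    exact neg_inj.mp (tr_Mset_injective hm hmN h)

lemma mul_abs_dropF_sub_snd_le {X : Finset (ZMod N)} (hX : X ∈ psector N m) :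
    ((nX N m X : ℝ) - 2) * |(dropF N m ε p - dropF N m ε q).2 X| ≤
      |ε| * ∑ j ∈ pbdry N (X ∆ Mset N m),
          |pext N m p.2 (X ∆ {j, j + 1}) - pext N m q.2 (X ∆ {j, j + 1})|
        + (∑ s, |p.1 s * pext N m p.2 (relTr N m X s)
            - q.1 s * pext N m q.2 (relTr N m X s)|) / 2 := by
  have hn : (0 : ℝ) < (nX N m X : ℝ) - 2 := by linarith [two_le_nX_sub_two hX]
  rw [dropF_sub_snd ε p q hX]
  set H := ∑ j ∈ pbdry N (X ∆ Mset N m),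
    (pext N m p.2 (X ∆ {j, j + 1}) - pext N m q.2 (X ∆ {j, j + 1}))
  set C := ∑ s, (p.1 s * pext N m p.2 (relTr N m X s) - q.1 s * pext N m q.2 (relTr N m X s))
  calc ((nX N m X : ℝ) - 2) * |-(ε / ((nX N m X : ℝ) - 2)) * H
        + (1 / (2 * ((nX N m X : ℝ) - 2))) * C|
      = |-ε * H + C / 2| := by
        rw [← abs_of_pos hn, ← abs_mul, abs_of_pos hn]
        congr 1
        field_simp
    _ ≤ |ε| * |H| + |C| / 2 := by
        refine (abs_add_le _ _).trans_eq ?_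
        rw [abs_mul, abs_neg, abs_div, abs_two]
    _ ≤ _ := by
        gcongr
        · exact abs_sum_le_sum_abs _ _
        · exact abs_sum_le_sum_abs _ _

lemma sum_sum_abs_collision_sub_le (hmN : m < N) :
    ∑ X ∈ psector N m, ∑ s, |p.1 s * pext N m p.2 (relTr N m X s)
        - q.1 s * pext N m q.2 (relTr N m X s)|
      ≤ max (pnorm N m p) (pnorm N m q) * pnorm N m (p - q) / 4 := by
  set T := ∑ s, |(p - q).1 s|
  set S := sectorNorm N m (p - q).2
  have hsplit : ∀ s, ∀ X ∈ psector N m,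
      |p.1 s * pext N m p.2 (relTr N m X s) - q.1 s * pext N m q.2 (relTr N m X s)|
        ≤ |(p - q).1 s| * |p.2 (relTr N m X s)| + |q.1 s| * |(p - q).2 (relTr N m X s)| := by
    intro s X hX
    rw [pext_of_mem_psector hmN _ (relTr_mem_psector hX s),
      pext_of_mem_psector hmN _ (relTr_mem_psector hX s), ← abs_mul, ← abs_mul]
    refine le_of_eq_of_le (congrArg abs ?_) (abs_add_le _ _)
    simp only [Prod.fst_sub, Prod.snd_sub, Pi.sub_apply]
    ring
  have hp : ∀ s, ∑ X ∈ psector N m, |p.2 (relTr N m X s)| ≤ pnorm N m p / 4 := fun s => by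
    have := (sum_psector_relTr_le (m := m) s fun W _ => abs_nonneg (p.2 W)).trans
      ((le_div_iff₀' two_pos).mpr (two_mul_sum_abs_le_sectorNorm p.2))
    linarith [two_mul_sectorNorm_le_pnorm (m := m) p]
  have hd : ∀ s, ∑ X ∈ psector N m, |(p - q).2 (relTr N m X s)| ≤ S / 2 := fun s =>
    (sum_psector_relTr_le s fun W _ => abs_nonneg _).trans
      ((le_div_iff₀' two_pos).mpr (two_mul_sum_abs_le_sectorNorm _))
  calc _ = ∑ s, ∑ X ∈ psector N m, |p.1 s * pext N m p.2 (relTr N m X s)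
        - q.1 s * pext N m q.2 (relTr N m X s)| := sum_comm
    _ ≤ ∑ s, (|(p - q).1 s| * (pnorm N m p / 4) + |q.1 s| * (S / 2)) := by
        refine sum_le_sum fun s _ => (sum_le_sum (hsplit s)).trans ?_
        rw [sum_add_distrib, ← mul_sum, ← mul_sum]
        gcongr
        exacts [hp s, hd s]
    _ = T * (pnorm N m p / 4) + (∑ s, |q.1 s|) * (S / 2) := by
        rw [sum_add_distrib, sum_mul, sum_mul]
    _ ≤ max (pnorm N m p) (pnorm N m q) * pnorm N m (p - q) / 4 := by
        have hT : 0 ≤ T := sum_nonneg fun s _ => abs_nonneg _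
        have hS : 0 ≤ S := sectorNorm_nonneg _
        have hpq : pnorm N m (p - q) = T + 2 * S := rfl
        have hq := (sum_abs_fst_le_pnorm (m := m) q).trans (le_max_right (pnorm N m p) _)
        have hp := le_max_left (pnorm N m p) (pnorm N m q)
        rw [hpq]
        nlinarith

lemma two_mul_sectorNorm_dropF_sub_le (hm : 0 < m) (hmN : m < N) :
    2 * sectorNorm N m (dropF N m ε p - dropF N m ε q).2 ≤
      4 * |ε| * sectorNorm N m (p - q).2
        + max (pnorm N m p) (pnorm N m q) * pnorm N m (p - q) / 4 := by
  have hhop := sum_sum_abs_pext_sub_le hm hmN (psector N m) (fun X => pbdry N (X ∆ Mset N m))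
    (fun X j => X ∆ {j, j + 1}) p.2 q.2 ?_ ?_
  · calc 2 * sectorNorm N m (dropF N m ε p - dropF N m ε q).2
        ≤ 2 * ∑ X ∈ psector N m, (|ε| * ∑ j ∈ pbdry N (X ∆ Mset N m),
            |pext N m p.2 (X ∆ {j, j + 1}) - pext N m q.2 (X ∆ {j, j + 1})|
          + (∑ s, |p.1 s * pext N m p.2 (relTr N m X s)
              - q.1 s * pext N m q.2 (relTr N m X s)|) / 2) := by
          rw [sectorNorm]
          gcongr with X hX
          exact mul_abs_dropF_sub_snd_le ε p q hX
      _ = 2 * |ε| * ∑ X ∈ psector N m, ∑ j ∈ pbdry N (X ∆ Mset N m),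
            |pext N m p.2 (X ∆ {j, j + 1}) - pext N m q.2 (X ∆ {j, j + 1})|
          + ∑ X ∈ psector N m, ∑ s, |p.1 s * pext N m p.2 (relTr N m X s)
              - q.1 s * pext N m q.2 (relTr N m X s)| := by
          rw [sum_add_distrib, ← mul_sum, ← sum_div]
          ring
      _ ≤ 2 * |ε| * (2 * sectorNorm N m (p.2 - q.2))
          + max (pnorm N m p) (pnorm N m q) * pnorm N m (p - q) / 4 :=
          add_le_add (mul_le_mul_of_nonneg_left hhop (by positivity))
            (sum_sum_abs_collision_sub_le p q hmN)
      _ = _ := by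
          rw [Prod.snd_sub]
          ring
  · intro X hX j hj
    rw [symmDiff_right_comm, card_symmDiff_pair_of_mem_pbdry hj, mem_pbdry_symmDiff_pair]
    exact ⟨(mem_filter.mp hX).2.1, hj⟩
  · intro X _ X' _ j _ h
    exact symmDiff_left_injective _ h

theorem dropF_lipschitz (hm : 0 < m) (hmN : m < N) :
    pnorm N m (dropF N m ε p - dropF N m ε q)
      ≤ (4 * |ε| + max (pnorm N m p) (pnorm N m q)) * pnorm N m (p - q) := by
  have hfst := sum_abs_dropF_sub_fst_le ε p q hm hmN
  have hsnd := two_mul_sectorNorm_dropF_sub_le ε p q hm hmN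
  have hS := mul_le_mul_of_nonneg_left (two_mul_sectorNorm_le_pnorm (m := m) (p - q))
    (abs_nonneg ε)
  have hmax : 0 ≤ max (pnorm N m p) (pnorm N m q) * pnorm N m (p - q) :=
    mul_nonneg ((pnorm_nonneg p).trans (le_max_left _ _)) (pnorm_nonneg _)
  rw [pnorm_eq]
  linarith

end Estimates

theorem dropF_contraction_general (N : ℕ) [NeZero N] (m : ℕ) (ε : ℝ)
    (hm : 2 ≤ m) (hmN : m + 2 ≤ N) :
    (∀ p q : (ZMod N → ℝ) × (Finset (ZMod N) → ℝ),
        pnorm N m (dropF N m ε p - dropF N m ε q)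
          ≤ (4 * |ε| + max (pnorm N m p) (pnorm N m q)) * pnorm N m (p - q)) ∧
      ∀ δ : ℝ, 0 < δ → 4 * |ε| + δ < 1 →
        ∀ p q : (ZMod N → ℝ) × (Finset (ZMod N) → ℝ),
          pnorm N m p ≤ δ → pnorm N m q ≤ δ →
            pnorm N m (dropF N m ε p - dropF N m ε q)
              ≤ (4 * |ε| + δ) * pnorm N m (p - q) := by
  have hlip := fun p q => dropF_lipschitz ε p q (by omega : 0 < m) (by omega : m < N)
  refine ⟨hlip, fun δ _ _ p q hp hq => (hlip p q).trans ?_⟩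
  gcongr
  · exact pnorm_nonneg _
  · exact max_le hp hq

theorem dropF_contraction (N : ℕ) [NeZero N] (m : ℕ) (ε : ℝ)
    (hN : 4 ≤ N) (hm : 2 ≤ m) (hmN : m + 2 ≤ N) :
    (∀ p q : (ZMod N → ℝ) × (Finset (ZMod N) → ℝ),
        pnorm N m (dropF N m ε p - dropF N m ε q)
          ≤ (4 * |ε| + max (pnorm N m p) (pnorm N m q)) * pnorm N m (p - q)) ∧
      ∀ δ : ℝ, 0 < δ → 4 * |ε| + δ < 1 →
        ∀ p q : (ZMod N → ℝ) × (Finset (ZMod N) → ℝ),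
          pnorm N m p ≤ δ → pnorm N m q ≤ δ →
            pnorm N m (dropF N m ε p - dropF N m ε q)
              ≤ (4 * |ε| + δ) * pnorm N m (p - q) :=
  dropF_contraction_general N m ε hm hmN
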